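/- (No two-set Π⁰₂ cover, purely combinatorial form for n = 2.) For any two (3)-trains τ⁰₀,…,τ⁰_{m₀} and τ¹₀,…,τ¹_{m₁} (trains of 3-element sets) and any 2-coloring c of pairs, there exists c* : ⋃ τ^j_i → {R,B} such that every c-homogeneous τ^j_i of color ι contains a point of c*-color ῑ. Moreover the construction processes the sets in ≺-decreasing order and assigns at most one new value of c* per set, never using the minimum element of the set being processed. -/

import Mathlib

/-- An `n`-train of length `m+1`: a sequence `τ 0, …, τ m` of distinct `n`-element
subsets of `ℕ` such that every element of `τ (i+1) \ τ i` exceeds every element of `τ i`. -/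
def IsTrain (n m : ℕ) (τ : ℕ → Finset ℕ) : Prop :=
  (∀ i ≤ m, (τ i).card = n) ∧
  (∀ i ≤ m, ∀ i' ≤ m, i ≠ i' → τ i ≠ τ i') ∧
  (∀ i < m, ∀ a ∈ τ (i + 1) \ τ i, ∀ x ∈ τ i, x < a)

/-- `kth σ k` is the `(k+1)`-st smallest element of `σ`. -/
def kth (σ : Finset ℕ) (k : ℕ) : ℕ := (σ.sort (· ≤ ·)).getD k 0

/-- `Prec n σ σ'` : at the largest index `k < n` of disagreement, `σ (k) > σ' (k)`. -/
def Prec (n : ℕ) (σ σ' : Finset ℕ) : Prop :=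
  ∃ k < n, kth σ' k < kth σ k ∧ ∀ k', k < k' → k' < n → kth σ k' = kth σ' k'

/-- `σ` is `c`-homogeneous with color `ι`. -/
def Homog (c : Sym2 ℕ → Bool) (σ : Finset ℕ) (ι : Bool) : Prop :=
  ∀ x ∈ σ, ∀ y ∈ σ, x ≠ y → c s(x, y) = ι

/-!
Colour the points from the top down. A homogeneous set `{x < y < z}` of colour `ι` is served
by its top `z`, unless `z` already has colour `ι`; then its middle `y` is forced to colour `!ι`.
A point that is not forced gets the colour opposite to that of a homogeneous set it is the top
of. Since forcing only looks at larger points, this is a well-founded recursion, and all that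
has to be checked is that no point is forced both ways. Homogeneous sets of different colours
share at most one point, while two sets of one train with the same middle share two points.
For sets `σ`, `π` from the two trains with the same middle and tops `z < z'`, look at why `z`
got its colour: a third homogeneous set `ρ` of the other colour has `z` as middle or top, and
the train property makes `σ` share two points with `ρ` or with `π`.
-/

lemma kth_eq_getElem {σ : Finset ℕ} {k : ℕ} (hk : k < σ.card) :
    kth σ k = (σ.sort (· ≤ ·))[k]'(by rwa [Finset.length_sort]) :=
  List.getD_eq_getElem ..

lemma kth_mem {σ : Finset ℕ} {k : ℕ} (hk : k < σ.card) : kth σ k ∈ σ := by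
  rw [kth_eq_getElem hk, ← Finset.mem_sort (· ≤ ·)]
  exact List.getElem_mem _

lemma kth_lt_kth {σ : Finset ℕ} {k l : ℕ} (hkl : k < l) (hl : l < σ.card) :
    kth σ k < kth σ l := by
  rw [kth_eq_getElem (hkl.trans hl), kth_eq_getElem hl]
  exact σ.sortedLT_sort.getElem_lt_getElem_iff.2 hkl

lemma le_kth_of_card_eq_succ {σ : Finset ℕ} {k a : ℕ} (hσ : σ.card = k + 1) (ha : a ∈ σ) :
    a ≤ kth σ k := by
  obtain ⟨l, hl, rfl⟩ := List.getElem_of_mem ((Finset.mem_sort (· ≤ ·)).2 ha)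
  rw [Finset.length_sort] at hl
  rw [kth_eq_getElem (by omega)]
  exact σ.sortedLT_sort.getElem_le_getElem_iff.2 (by omega)

namespace IsTrain

variable {n m : ℕ} {τ : ℕ → Finset ℕ}

lemma exists_forall_lt (h : IsTrain n m τ) {i : ℕ} (hi : i < m) :
    ∃ a ∈ τ (i + 1), ∀ x ∈ τ i, x < a := by
  have hne : τ (i + 1) ≠ τ i := h.2.1 _ hi _ hi.le (by omega)
  have hnss : ¬ τ (i + 1) ⊆ τ i := fun hss =>
    hne (Finset.eq_of_subset_of_card_le hss (by rw [h.1 i hi.le, h.1 (i + 1) hi]))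
  obtain ⟨a, ha⟩ := Finset.not_subset.1 hnss
  exact ⟨a, ha.1, h.2.2 i hi a (Finset.mem_sdiff.2 ha)⟩

lemma exists_lt_of_lt (h : IsTrain n m τ) {i j x : ℕ} (hij : i < j) (hj : j ≤ m) (hx : x ∈ τ i) :
    ∃ x' ∈ τ j, x < x' := by
  induction j, hij using Nat.le_induction with
  | base => exact (h.exists_forall_lt hj).imp fun a ha => ⟨ha.1, ha.2 x hx⟩
  | succ j hij ih =>
    obtain ⟨x', hx', hxx'⟩ := ih (by omega)
    obtain ⟨a, ha, hlt⟩ := h.exists_forall_lt hj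
    exact ⟨a, ha, hxx'.trans (hlt x' hx')⟩

lemma mem_of_le (h : IsTrain n m τ) {i j a x : ℕ} (hij : i ≤ j) (hj : j ≤ m) (ha : a ∈ τ j)
    (hx : x ∈ τ i) (hax : a ≤ x) : a ∈ τ i := by
  induction j, hij using Nat.le_induction with
  | base => exact ha
  | succ j hij ih =>
    refine ih (by omega) (by_contra fun haj => ?_)
    obtain ⟨x', hx', hxx'⟩ : ∃ x' ∈ τ j, x ≤ x' := by
      rcases hij.eq_or_lt with rfl | hlt
      · exact ⟨x, hx, le_rfl⟩
      · exact (h.exists_lt_of_lt hlt (by omega) hx).imp fun _ h => ⟨h.1, h.2.le⟩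
    have := h.2.2 j (by omega) a (Finset.mem_sdiff.2 ⟨ha, haj⟩) x' hx'
    omega

end IsTrain

lemma Homog.eq_of_mem {c : Sym2 ℕ → Bool} {σ ρ : Finset ℕ} {a b : Bool} (hσ : Homog c σ a)
    (hρ : Homog c ρ b) {p q : ℕ} (hpσ : p ∈ σ) (hqσ : q ∈ σ) (hpρ : p ∈ ρ) (hqρ : q ∈ ρ)
    (hpq : p ≠ q) : a = b :=
  (hσ p hpσ q hqσ hpq).symm.trans (hρ p hpρ q hqρ hpq)

structure IsTrainFamily (𝒮 : Set (Finset ℕ)) : Prop where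
  card_eq : ∀ σ ∈ 𝒮, σ.card = 3
  mem_of_le : ∀ σ ∈ 𝒮, ∀ σ' ∈ 𝒮, kth σ 2 ≤ kth σ' 2 → ∀ a ∈ σ', a ≤ kth σ 2 → a ∈ σ

lemma IsTrain.isTrainFamily {m : ℕ} {τ : ℕ → Finset ℕ} (h : IsTrain 3 m τ) :
    IsTrainFamily (τ '' Set.Iic m) := by
  refine ⟨?_, ?_⟩
  · rintro _ ⟨i, hi, rfl⟩
    exact h.1 i hi
  · rintro _ ⟨i, hi, rfl⟩ _ ⟨j, hj, rfl⟩ htop a ha hai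
    refine h.mem_of_le (not_lt.1 fun hji => ?_) hj ha (kth_mem (by rw [h.1 i hi]; omega)) hai
    obtain ⟨x, hx, hlt⟩ := h.exists_lt_of_lt hji hi (kth_mem (k := 2) (by rw [h.1 j hj]; omega))
    have := le_kth_of_card_eq_succ (h.1 i hi) hx
    omega

namespace IsTrainFamily

variable {𝒮 : Set (Finset ℕ)} {σ : Finset ℕ}

lemma kth_mem (h : IsTrainFamily 𝒮) (hσ : σ ∈ 𝒮) {k : ℕ} (hk : k < 3) : kth σ k ∈ σ :=
  _root_.kth_mem (by rwa [h.card_eq σ hσ])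

lemma kth_zero_lt_kth_one (h : IsTrainFamily 𝒮) (hσ : σ ∈ 𝒮) : kth σ 0 < kth σ 1 :=
  kth_lt_kth zero_lt_one (by rw [h.card_eq σ hσ]; omega)

lemma kth_one_lt_kth_two (h : IsTrainFamily 𝒮) (hσ : σ ∈ 𝒮) : kth σ 1 < kth σ 2 :=
  kth_lt_kth one_lt_two (by rw [h.card_eq σ hσ]; omega)

lemma homog_eq_of_kth_one_eq (h : IsTrainFamily 𝒮) {c : Sym2 ℕ → Bool} {σ π : Finset ℕ}
    {a b : Bool} (hσ : σ ∈ 𝒮) (hπ : π ∈ 𝒮) (hσa : Homog c σ a) (hπb : Homog c π b)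
    (hmid : kth σ 1 = kth π 1) : a = b := by
  wlog htop : kth σ 2 ≤ kth π 2 generalizing σ π a b
  · exact (this hπ hσ hπb hσa hmid.symm (le_of_not_ge htop)).symm
  have h01 := h.kth_zero_lt_kth_one hπ
  have h12 := h.kth_one_lt_kth_two hσ
  have hmin : kth π 0 ∈ σ := h.mem_of_le σ hσ π hπ htop _ (h.kth_mem hπ (by norm_num)) (by omega)
  exact hσa.eq_of_mem hπb hmin (h.kth_mem hσ (by norm_num)) (h.kth_mem hπ (by norm_num))
    (hmid ▸ h.kth_mem hπ (by norm_num)) (by omega)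

end IsTrainFamily

lemma WellFounded.exists_fixedPoint {α β : Type*} [Nonempty β] {r : α → α → Prop}
    (hr : WellFounded r) (F : (α → β) → α → β)
    (hF : ∀ f g x, (∀ y, r y x → f y = g y) → F f x = F g x) : ∃ f, F f = f := by
  classical
  let f : α → β :=
    hr.fix fun x g => F (fun y => if h : r y x then g y h else Classical.arbitrary β) x
  refine ⟨f, funext fun x => ?_⟩
  rw [show f x = _ from hr.fix_eq _ x]
  exact hF _ _ x fun y hy => by simp [hy, f]

section Coloring

variable (𝒮 : Bool → Set (Finset ℕ)) (c : Sym2 ℕ → Bool)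

def Forces (f : ℕ → Bool) (y : ℕ) (v : Bool) : Prop :=
  ∃ t, ∃ σ ∈ 𝒮 t, Homog c σ (!v) ∧ kth σ 1 = y ∧ f (kth σ 2) = !v

open Classical in
noncomputable def colorStep (f : ℕ → Bool) (z : ℕ) : Bool :=
  if Forces 𝒮 c f z true then true
  else if Forces 𝒮 c f z false then false
  else if ∃ t, ∃ σ ∈ 𝒮 t, Homog c σ true ∧ kth σ 2 = z then false
  else true

variable {𝒮 c} {cs : ℕ → Bool}

lemma exists_colorStep_eq (h : ∀ t, IsTrainFamily (𝒮 t)) (hfin : ∀ t, (𝒮 t).Finite) :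
    ∃ cs, colorStep 𝒮 c cs = cs := by
  obtain ⟨M, hM⟩ := (Set.finite_iUnion fun t => (hfin t).image fun σ => kth σ 2).bddAbove
  have htop : ∀ t, ∀ σ ∈ 𝒮 t, kth σ 2 ≤ M := fun t σ hσ =>
    hM (Set.mem_iUnion.2 ⟨t, σ, hσ, rfl⟩)
  have hwf : WellFounded fun w z => z < w ∧ w ≤ M :=
    Subrelation.wf (fun {w z} (hwz : z < w ∧ w ≤ M) => show M + 1 - w < M + 1 - z by omega)
      (measure fun z => M + 1 - z).wf
  refine hwf.exists_fixedPoint _ fun f g z hfg => ?_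
  have hforces : ∀ v, Forces 𝒮 c f z v ↔ Forces 𝒮 c g z v := fun v => by
    refine exists_congr fun t => exists_congr fun σ => and_congr_right fun hσ =>
      and_congr_right fun _ => and_congr_right fun hmid => ?_
    rw [hfg _ ⟨hmid ▸ (h t).kth_one_lt_kth_two hσ, htop t σ hσ⟩]
  classical
  simp only [colorStep, hforces]

lemma forces_or_exists_homog_not_of_eq (hcs : colorStep 𝒮 c cs = cs) {t : Bool} {σ : Finset ℕ}
    {a : Bool} (hσ : σ ∈ 𝒮 t) (hσa : Homog c σ a) (hz : cs (kth σ 2) = a) :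
    Forces 𝒮 c cs (kth σ 2) a ∨ ∃ r, ∃ ρ ∈ 𝒮 r, Homog c ρ (!a) ∧ kth ρ 2 = kth σ 2 := by
  rw [← hcs, colorStep] at hz
  split_ifs at hz with h1 h2 h3 <;> subst hz
  · exact Or.inl h1
  · exact Or.inl h2
  · exact Or.inr h3
  · exact absurd ⟨t, σ, hσ, hσa, rfl⟩ h3

lemma homog_eq_of_kth_one_eq_of_lt (h : ∀ t, IsTrainFamily (𝒮 t))
    (hcs : colorStep 𝒮 c cs = cs) {s t : Bool} {σ π : Finset ℕ} {a b : Bool} (hst : s ≠ t)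
    (hσ : σ ∈ 𝒮 s) (hπ : π ∈ 𝒮 t) (hσa : Homog c σ a) (hπb : Homog c π b)
    (hmid : kth σ 1 = kth π 1) (htop : kth σ 2 < kth π 2) (hz : cs (kth σ 2) = a) : a = b := by
  by_contra hab
  obtain rfl : b = !a := by cases a <;> cases b <;> simp_all
  have hσ01 := (h s).kth_zero_lt_kth_one hσ
  have hσ12 := (h s).kth_one_lt_kth_two hσ
  suffices ∃ ρ p, Homog c ρ (!a) ∧ p ∈ σ ∧ p ∈ ρ ∧ kth σ 2 ∈ ρ ∧ p < kth σ 2 by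
    obtain ⟨ρ, p, hρa, hpσ, hpρ, hzρ, hpz⟩ := this
    simpa using hσa.eq_of_mem hρa hpσ ((h s).kth_mem hσ (by norm_num)) hpρ hzρ hpz.ne
  have hyπ : kth σ 1 ∈ π := hmid ▸ (h t).kth_mem hπ (by norm_num)
  rcases forces_or_exists_homog_not_of_eq hcs hσ hσa hz with
    ⟨r, ρ, hρ, hρa, hρmid, -⟩ | ⟨r, ρ, hρ, hρa, hρtop⟩ <;>
  obtain rfl | rfl : r = s ∨ r = t := by cases r <;> cases s <;> cases t <;> simp_all
  · have hρ12 := (h r).kth_one_lt_kth_two hρ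
    have hρ01 := (h r).kth_zero_lt_kth_one hρ
    refine ⟨ρ, kth ρ 0, hρa, ?_, (h r).kth_mem hρ (by norm_num),
      hρmid ▸ (h r).kth_mem hρ (by norm_num), by omega⟩
    exact (h r).mem_of_le σ hσ ρ hρ (by omega) _ ((h r).kth_mem hρ (by norm_num)) (by omega)
  · have hρ12 := (h r).kth_one_lt_kth_two hρ
    have hzρ : kth σ 2 ∈ ρ := hρmid ▸ (h r).kth_mem hρ (by norm_num)
    have hyσ : kth σ 1 ∈ σ := (h s).kth_mem hσ (by norm_num)
    rcases le_or_gt (kth ρ 2) (kth π 2) with hle | hlt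
    · exact ⟨ρ, kth σ 1, hρa, hyσ, (h r).mem_of_le ρ hρ π hπ hle _ hyπ (by omega), hzρ, hσ12⟩
    · exact ⟨π, kth σ 1, hπb, hyσ, hyπ,
        (h r).mem_of_le π hπ ρ hρ hlt.le _ hzρ (by omega), hσ12⟩
  · have hρ12 := (h r).kth_one_lt_kth_two hρ
    exact ⟨ρ, kth ρ 1, hρa,
      (h r).mem_of_le σ hσ ρ hρ hρtop.ge _ ((h r).kth_mem hρ (by norm_num)) (by omega),
      (h r).kth_mem hρ (by norm_num), hρtop ▸ (h r).kth_mem hρ (by norm_num), by omega⟩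
  · exact ⟨ρ, kth σ 1, hρa, (h s).kth_mem hσ (by norm_num),
      (h r).mem_of_le ρ hρ π hπ (by omega) _ hyπ (by omega),
      hρtop ▸ (h r).kth_mem hρ (by norm_num), hσ12⟩

lemma eq_of_forces (h : ∀ t, IsTrainFamily (𝒮 t)) (hcs : colorStep 𝒮 c cs = cs) {y : ℕ}
    {v : Bool} (hv : Forces 𝒮 c cs y v) : cs y = v := by
  have hnot : ¬ Forces 𝒮 c cs y (!v) := by
    obtain ⟨s, σ, hσ, hσv, hσmid, hσtop⟩ := hv
    rintro ⟨t, π, hπ, hπv, hπmid, hπtop⟩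
    rw [Bool.not_not] at hπv hπtop
    have hmid : kth σ 1 = kth π 1 := hσmid.trans hπmid.symm
    suffices (!v) = v by simp at this
    by_cases hst : s = t
    · subst hst
      exact (h s).homog_eq_of_kth_one_eq hσ hπ hσv hπv hmid
    rcases lt_trichotomy (kth σ 2) (kth π 2) with hlt | heq | hgt
    · exact homog_eq_of_kth_one_eq_of_lt h hcs hst hσ hπ hσv hπv hmid hlt hσtop
    · rw [heq, hπtop] at hσtop
      exact hσtop.symm
    · exact (homog_eq_of_kth_one_eq_of_lt h hcs (Ne.symm hst) hπ hσ hπv hσv hmid.symm hgt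
        hπtop).symm
  rw [← hcs, colorStep]
  cases v
  · rw [Bool.not_false] at hnot
    rw [if_neg hnot, if_pos hv]
  · rw [if_pos hv]

lemma exists_mem_eq_not_of_homog (h : ∀ t, IsTrainFamily (𝒮 t)) (hcs : colorStep 𝒮 c cs = cs)
    {t : Bool} {σ : Finset ℕ} {ι : Bool} (hσ : σ ∈ 𝒮 t) (hσι : Homog c σ ι) :
    ∃ a ∈ σ, cs a = !ι := by
  by_cases htop : cs (kth σ 2) = !ι
  · exact ⟨_, (h t).kth_mem hσ (by norm_num), htop⟩
  refine ⟨_, (h t).kth_mem hσ (by norm_num), eq_of_forces h hcs ⟨t, σ, hσ, ?_, rfl, ?_⟩⟩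
  · rwa [Bool.not_not]
  · simpa using htop

end Coloring

theorem exists_coloring_of_isTrainFamily {𝒮 : Bool → Set (Finset ℕ)}
    (h : ∀ t, IsTrainFamily (𝒮 t)) (hfin : ∀ t, (𝒮 t).Finite) (c : Sym2 ℕ → Bool) :
    ∃ cs : ℕ → Bool, ∀ t, ∀ σ ∈ 𝒮 t, ∀ ι, Homog c σ ι → ∃ a ∈ σ, cs a = !ι := by
  obtain ⟨cs, hcs⟩ := exists_colorStep_eq (c := c) h hfin
  exact ⟨cs, fun t σ hσ ι hσι => exists_mem_eq_not_of_homog h hcs hσ hσι⟩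

/-- The train lemma for `n = 2`: given two trains of 3-element sets and a 2-coloring
`c` of pairs, there is a vertex coloring `c*` of the union such that every
`c`-homogeneous set in either train of color `ι` contains a point of `c*`-color
`!ι`. -/
theorem train_lemma_two (m₀ m₁ : ℕ) (τ₀ τ₁ : ℕ → Finset ℕ)
    (h₀ : IsTrain 3 m₀ τ₀) (h₁ : IsTrain 3 m₁ τ₁) (c : Sym2 ℕ → Bool) :
    ∃ cs : ℕ → Bool,
      (∀ i ≤ m₀, ∀ ι : Bool, Homog c (τ₀ i) ι → ∃ a ∈ τ₀ i, cs a = !ι) ∧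
      (∀ i ≤ m₁, ∀ ι : Bool, Homog c (τ₁ i) ι → ∃ a ∈ τ₁ i, cs a = !ι) := by
  let 𝒮 : Bool → Set (Finset ℕ) := fun t => cond t (τ₁ '' Set.Iic m₁) (τ₀ '' Set.Iic m₀)
  obtain ⟨cs, hcs⟩ := exists_coloring_of_isTrainFamily (𝒮 := 𝒮)
    (by rintro (_ | _); exacts [h₀.isTrainFamily, h₁.isTrainFamily])
    (by rintro (_ | _) <;> exact (Set.finite_Iic _).image _) c
  exact ⟨cs, fun i hi => hcs false _ ⟨i, hi, rfl⟩, fun i hi => hcs true _ ⟨i, hi, rfl⟩⟩
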